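/- Let r > ℓ ≥ 1 and let F be an (r−ℓ)-graph. Then for all positive integers t₁,…,t_ℓ, ex(n, F(t₁,…,t_ℓ)) = O_{F,t₁,…,t_ℓ}(n^{r − 1/(s(F)·∏_{i=1}^{ℓ−1} t_i)}), i.e., there is a constant C depending only on F and t₁,…,t_ℓ such that ex(n, F(t₁,…,t_ℓ)) ≤ C · n^{r − 1/(s(F)·t₁⋯t_{ℓ−1})} for all n. -/

import Mathlib

open Finset

/-- An `r`-uniform hypergraph on vertex type `V`: a set of edges, each an `r`-element
subset of `V`. -/
structure HGraph (r : ℕ) (V : Type) where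
  edges : Finset (Finset V)
  uniform : ∀ e ∈ edges, e.card = r

variable {r : ℕ} {α β γ : Type}

/-- The set of homomorphisms from `F` to `H`: maps sending every edge of `F` to an edge of `H`. -/
def homFinset [Fintype α] [DecidableEq α] [Fintype β] [DecidableEq β]
    (F : HGraph r α) (H : HGraph r β) : Finset (α → β) :=
  Finset.univ.filter fun φ => ∀ e ∈ F.edges, e.image φ ∈ H.edges

/-- The number of homomorphisms from `F` to `H`. -/
def homCount [Fintype α] [DecidableEq α] [Fintype β] [DecidableEq β]
    (F : HGraph r α) (H : HGraph r β) : ℕ :=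
  (homFinset F H).card

/-- The homomorphism density `t_F(H) = hom(F,H) / v(H)^{v(F)}`. -/
noncomputable def homDensity [Fintype α] [DecidableEq α] [Fintype β] [DecidableEq β]
    (F : HGraph r α) (H : HGraph r β) : ℝ :=
  (homCount F H : ℝ) / (Fintype.card β : ℝ) ^ (Fintype.card α)

/-- `K_r^{(r)}`: the `r`-graph consisting of a single edge on `r` vertices. -/
def KEdge (r : ℕ) : HGraph r (Fin r) :=
  ⟨{Finset.univ}, by intro e he; rw [Finset.mem_singleton] at he; subst he; simp⟩

/-- Edge density of an `r`-graph, `t_{K_r^{(r)}}(H)`. -/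
noncomputable def edgeDensity [Fintype β] [DecidableEq β] (H : HGraph r β) : ℝ :=
  homDensity (KEdge r) H

/-- An `r`-graph `F` is Sidorenko if `t_F(H) ≥ t_{K_r^{(r)}}(H)^{e(F)}` for all `r`-graphs `H`. -/
def IsSidorenko [Fintype α] [DecidableEq α] (F : HGraph r α) : Prop :=
  ∀ (β : Type) [Fintype β] [DecidableEq β] (H : HGraph r β),
    homDensity F H ≥ edgeDensity H ^ F.edges.card

/-- The Sidorenko exponent
`s(F) = sup {s ≥ 0 : ∃ r-graph H with t_F(H) = t_{K_r^{(r)}}(H)^s > 0}`. -/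
noncomputable def sidorenkoExp [Fintype α] [DecidableEq α] (F : HGraph r α) : ℝ :=
  sSup {s : ℝ | 0 ≤ s ∧ ∃ (n : ℕ) (H : HGraph r (Fin n)),
    homDensity F H = edgeDensity H ^ s ∧ 0 < edgeDensity H ^ s}

/-- `d_M(U)`: the number of edges of `M` containing at least one vertex of `U`. -/
def degNear [DecidableEq α] (M : HGraph r α) (U : Finset α) : ℕ :=
  (M.edges.filter fun e => ∃ v ∈ U, v ∈ e).card

/-- The set of vertices appearing in some edge of a given edge set. -/
def edgeSupport [DecidableEq α] (Es : Finset (Finset α)) : Finset α :=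
  Es.biUnion id
/-- Given `(r-1)`-uniform edge sets `E i` (the prescribed link hypergraphs of the `t`
vertices of the `r`-th part), the `r`-graph on `α ⊕ Fin t` whose link profile is
`(E 0, …, E (t-1))`. -/
def linkCone {k t : ℕ} {α : Type} [DecidableEq α] (E : Fin t → Finset (Finset α))
    (hE : ∀ i, ∀ f ∈ E i, f.card = k) : HGraph (k + 1) (α ⊕ Fin t) where
  edges := Finset.univ.biUnion fun i : Fin t =>
    (E i).image fun f => insert (Sum.inr i) (f.image Sum.inl)
  uniform := by
    intro e he
    simp only [Finset.mem_biUnion, Finset.mem_image] at he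
    obtain ⟨i, -, f, hf, rfl⟩ := he
    rw [Finset.card_insert_of_notMem (by simp),
      Finset.card_image_of_injective _ Sum.inl_injective, hE i f hf]
/-- `F(t)`: the `r`-graph obtained from the `(r−1)`-graph `F` by adding `t` new
vertices, each of whose link hypergraph is `F`. -/
def HGraph.cone {k : ℕ} {α : Type} [DecidableEq α] (F : HGraph k α) (t : ℕ) :
    HGraph (k + 1) (α ⊕ Fin t) :=
  linkCone (fun _ : Fin t => F.edges) (fun _ f hf => F.uniform f hf)
/-- `H` contains a copy of `G` as a sub-hypergraph. -/
def HGraph.ContainsCopy [DecidableEq β] (H : HGraph r β) (G : HGraph r γ) : Prop :=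
  ∃ φ : γ → β, Function.Injective φ ∧ ∀ e ∈ G.edges, e.image φ ∈ H.edges

/-- The extremal (Turán) number `ex(n, G)`: the maximum number of edges of an
`n`-vertex `r`-graph containing no sub-hypergraph isomorphic to `G`. -/
noncomputable def exNum {γ : Type} (n : ℕ) (G : HGraph r γ) : ℕ :=
  sSup {m : ℕ | ∃ H : HGraph r (Fin n), H.edges.card = m ∧ ¬ H.ContainsCopy G}

/-- A hypergraph bundled with its uniformity and (finite) vertex type. -/
structure BHG where
  r : ℕ
  V : Type
  fin : Fintype V
  deq : DecidableEq V
  G : HGraph r V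

/-- The coning operation `F ↦ F(t)` on bundled hypergraphs. -/
def BHG.cone (b : BHG) (t : ℕ) : BHG := by
  letI := b.fin; letI := b.deq
  exact ⟨b.r + 1, b.V ⊕ Fin t, inferInstance, inferInstance, b.G.cone t⟩

/-- The iterated coning `F ↦ F(t₁, …, t_ℓ)`. -/
def BHG.coneIter (b : BHG) (ts : List ℕ) : BHG := ts.foldl BHG.cone b

/-- The extremal number of a bundled hypergraph. -/
noncomputable def BHG.exNum (b : BHG) (n : ℕ) : ℕ := by
  letI := b.fin; letI := b.deq
  exact _root_.exNum n b.G


/-!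
Write `s = s(F)`. If `s = 0` the exponent is `r` and the bound is trivial, so let `s > 0`. Then `F`
has an edge, `s ≥ 1`, and `t_F(H) ≥ t_K(H) ^ s` for every `H`: the supremum defining `s` only sees
graphs with `t_F(H) > 0`, and a graph `L` with `t_F(L) = 0 < t_K(L)` is ruled out because the
disjoint union of a large blow-up of `L` with a copy of `F` would have unboundedly large exponents.

Coning multiplies such an exponent by `t`: `hom(J(t), H) = ∑_φ |A(φ)| ^ t`, where `A(φ)` is the set
of possible apexes of a cone over `φ(J)`, and Jensen's inequality over the links of `H` gives
`∑_φ |A(φ)| ≥ n ^ (v(J) + 1) t_K(H) ^ σ`. Applied to `J = F(t₁,…,t_{ℓ-1})` and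
`σ = s t₁⋯t_{ℓ-1}`: if `H` has more than `C n ^ (r - 1/σ)` edges then `∑_φ |A(φ)| > C n ^ v(J)`,
so some injective `φ` has more than `t_ℓ + v(J)` apexes, and these give a copy of `J(t_ℓ)`.
-/

open Function

theorem exists_image_univ_eq [DecidableEq β] {s : Finset β} (hs : #s = r) :
    ∃ u : Fin r → β, univ.image u = s := by
  refine ⟨fun i => (s.equivFinOfCardEq hs).symm i, ?_⟩
  ext x
  simp only [mem_image, mem_univ, true_and]
  exact ⟨by rintro ⟨i, rfl⟩; exact Subtype.prop _,
    fun hx => ⟨s.equivFinOfCardEq hs ⟨x, hx⟩, by simp⟩⟩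

theorem image_univ_cons [DecidableEq β] {k : ℕ} (v : β) (χ : Fin k → β) :
    univ.image (Fin.cons v χ : Fin (k + 1) → β) = insert v (univ.image χ) := by
  ext; simp [Fin.exists_fin_succ, eq_comm]

theorem card_filter_prod_eq_sum [Fintype α] [Fintype β] (p : α → β → Prop)
    [∀ a b, Decidable (p a b)] : #{x : α × β | p x.1 x.2} = ∑ a, #{b | p a b} := by
  simp only [card_filter, Fintype.sum_prod_type]

theorem card_mul_rpow_le_sum_rpow {ι : Type*} (s : Finset ι) {z : ι → ℝ} {d p : ℝ}
    (hz : ∀ i ∈ s, 0 ≤ z i) (hp : 1 ≤ p) (hd : ∑ i ∈ s, z i = #s * d) :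
    #s * d ^ p ≤ ∑ i ∈ s, z i ^ p := by
  rcases s.eq_empty_or_nonempty with rfl | hs
  · simp
  have hn : (0 : ℝ) < #s := mod_cast hs.card_pos
  have hjensen := Real.rpow_arith_mean_le_arith_mean_rpow s (fun _ => 1 / (#s : ℝ)) z
    (fun _ _ => by positivity) (by simp [hn.ne']) hz hp
  rw [← mul_sum, ← mul_sum, hd, show 1 / (#s : ℝ) * (#s * d) = d by field_simp] at hjensen
  calc (#s : ℝ) * d ^ p ≤ #s * (1 / #s * ∑ i ∈ s, z i ^ p) := by gcongr
    _ = ∑ i ∈ s, z i ^ p := by field_simp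

section Counting

variable [Fintype α] [DecidableEq α] [Fintype β] [DecidableEq β]

-- Multiplying by `|β|` (via the injection `(φ, b) ↦ update φ _ b`) avoids the exponent `|α| - 1`.
theorem card_filter_apply_mem_mul_le (u : α) (T : Finset β) :
    #{φ : α → β | φ u ∈ T} * Fintype.card β ≤ #T * Fintype.card β ^ Fintype.card α := by
  rw [← Fintype.card_fun, ← card_univ, ← card_univ (α := α → β), ← card_product, ← card_product]
  refine card_le_card_of_injOn (fun p => (p.1 u, update p.1 u p.2)) (fun p hp => ?_) ?_
  · rw [mem_coe, mem_product, mem_filter] at hp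
    simpa using hp.1.2
  · rintro ⟨φ, b⟩ - ⟨φ', b'⟩ - h
    obtain ⟨h₁, h₂⟩ := Prod.mk.inj h
    obtain rfl : b = b' := by simpa using congrFun h₂ u
    refine Prod.ext (funext fun x => ?_) rfl
    by_cases hx : x = u
    · subst hx; exact h₁
    · simpa [update_of_ne hx] using congrFun h₂ x

theorem card_filter_apply_eq_apply_mul_le {x y : α} (hxy : x ≠ y) :
    #{φ : α → β | φ x = φ y} * Fintype.card β ≤ Fintype.card β ^ Fintype.card α := by
  rw [← Fintype.card_fun, ← card_univ, ← card_univ (α := α → β), ← card_product]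
  refine card_le_card_of_injOn (fun p => update p.1 y p.2) (fun _ _ => mem_coe.2 (mem_univ _)) ?_
  rintro ⟨φ, b⟩ hp ⟨φ', b'⟩ hp' h
  rw [mem_coe, mem_product, mem_filter] at hp hp'
  obtain rfl : b = b' := by simpa using congrFun h y
  refine Prod.ext (funext fun z => ?_) rfl
  by_cases hz : z = y
  · have := congrFun h x
    simp only [update_of_ne hxy] at this
    rw [hz, ← hp.1.2, ← hp'.1.2]
    exact this
  · simpa [update_of_ne hz] using congrFun h z

theorem card_filter_not_injective_mul_le :
    #{φ : α → β | ¬Injective φ} * Fintype.card β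
      ≤ Fintype.card α ^ 2 * Fintype.card β ^ Fintype.card α := by
  have hsub : ({φ : α → β | ¬Injective φ} : Finset _)
      ⊆ (univ : Finset α).offDiag.biUnion fun p => {φ : α → β | φ p.1 = φ p.2} := by
    intro φ hφ
    obtain ⟨x, y, hxy, hne⟩ := not_injective_iff.1 (mem_filter.1 hφ).2
    simpa using ⟨x, y, hne, hxy⟩
  calc #{φ : α → β | ¬Injective φ} * Fintype.card β
      ≤ (∑ p ∈ (univ : Finset α).offDiag, #{φ : α → β | φ p.1 = φ p.2}) * Fintype.card β := by
        gcongr; exact (card_le_card hsub).trans card_biUnion_le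
    _ ≤ ∑ _p ∈ (univ : Finset α).offDiag, Fintype.card β ^ Fintype.card α := by
        rw [sum_mul]
        exact sum_le_sum fun p hp => card_filter_apply_eq_apply_mul_le (mem_offDiag.1 hp).2.2
    _ ≤ Fintype.card α ^ 2 * Fintype.card β ^ Fintype.card α := by
        rw [sum_const, smul_eq_mul, offDiag_card, card_univ, sq]
        gcongr
        exact Nat.sub_le _ _

end Counting

namespace HGraph

def IsHom [DecidableEq β] (F : HGraph r α) (H : HGraph r β) (φ : α → β) : Prop :=
  ∀ e ∈ F.edges, e.image φ ∈ H.edges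

instance [DecidableEq β] (F : HGraph r α) (H : HGraph r β) (φ : α → β) :
    Decidable (F.IsHom H φ) :=
  inferInstanceAs (Decidable (∀ e ∈ F.edges, e.image φ ∈ H.edges))

theorem IsHom.comp [DecidableEq β] [DecidableEq γ] {F : HGraph r α} {G : HGraph r β}
    {H : HGraph r γ} {g : β → γ} {φ : α → β} (hg : G.IsHom H g) (hφ : F.IsHom G φ) :
    F.IsHom H (g ∘ φ) := fun e he => by
  rw [← image_image]
  exact hg _ (hφ e he)

theorem isHom_kEdge_iff [DecidableEq β] {H : HGraph r β} {ψ : Fin r → β} :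
    (KEdge r).IsHom H ψ ↔ univ.image ψ ∈ H.edges := by
  simp [IsHom, KEdge]

theorem IsHom.of_kEdge [DecidableEq α] [DecidableEq β] {F : HGraph r α} {H : HGraph r β}
    {φ : α → β} (h : ∀ ψ : Fin r → β, (KEdge r).IsHom H ψ) : F.IsHom H φ := by
  intro e he
  obtain ⟨u, rfl⟩ := exists_image_univ_eq (F.uniform e he)
  rw [image_image]
  exact isHom_kEdge_iff.1 (h _)

def relabel [DecidableEq γ] (H : HGraph r β) (e : β ≃ γ) : HGraph r γ where
  edges := H.edges.image (·.image e)
  uniform := by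
    simp only [mem_image, forall_exists_index, and_imp, forall_apply_eq_imp_iff₂]
    intro s hs
    rw [card_image_of_injective _ e.injective, H.uniform s hs]

theorem isHom_relabel_iff [DecidableEq β] [DecidableEq γ] {F : HGraph r α} {H : HGraph r β}
    {e : β ≃ γ} {φ : α → β} : F.IsHom (H.relabel e) (e ∘ φ) ↔ F.IsHom H φ := by
  refine forall₂_congr fun f _ => ?_
  rw [← image_image, relabel, (image_injective e.injective).mem_finset_image]

def blowup [Fintype β] [DecidableEq β] (L : HGraph r β) (w : ℕ) : HGraph r (β × Fin w) where
  edges := {S ∈ univ.powersetCard r | S.image Prod.fst ∈ L.edges}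
  uniform _ hS := (mem_powersetCard.1 (mem_filter.1 hS).1).2

theorem isHom_fst_blowup [Fintype β] [DecidableEq β] (L : HGraph r β) (w : ℕ) :
    (L.blowup w).IsHom L Prod.fst :=
  fun _ hS => (mem_filter.1 hS).2

def sum [DecidableEq β] [DecidableEq γ] (G : HGraph r β) (H : HGraph r γ) : HGraph r (β ⊕ γ) where
  edges := G.edges.image (·.image Sum.inl) ∪ H.edges.image (·.image Sum.inr)
  uniform := by
    simp only [mem_union, mem_image]
    rintro _ (⟨e, he, rfl⟩ | ⟨e, he, rfl⟩)
    · rw [card_image_of_injective _ Sum.inl_injective, G.uniform e he]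
    · rw [card_image_of_injective _ Sum.inr_injective, H.uniform e he]

section Sum

variable [DecidableEq β] [DecidableEq γ]

theorem isHom_inl (G : HGraph r β) (H : HGraph r γ) : G.IsHom (G.sum H) Sum.inl :=
  fun _ he => mem_union_left _ (mem_image_of_mem _ he)

theorem isHom_inr (G : HGraph r β) (H : HGraph r γ) : H.IsHom (G.sum H) Sum.inr :=
  fun _ he => mem_union_right _ (mem_image_of_mem _ he)

theorem exists_isRight_of_isHom_sum (hr : r ≠ 0) {F : HGraph r α} {G : HGraph r β}
    (hG : ∀ ψ, ¬F.IsHom G ψ) (H : HGraph r γ) {φ : α → β ⊕ γ} (hφ : F.IsHom (G.sum H) φ) :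
    ∃ u, (φ u).isRight := by
  by_contra! hleft
  have hl (u : α) : (φ u).isLeft := Sum.not_isRight.1 (by simpa using hleft u)
  refine hG (fun u => (φ u).getLeft (hl u)) fun e he => ?_
  have hφe := hφ e he
  rw [show φ = Sum.inl ∘ fun u => (φ u).getLeft (hl u) from
    funext fun u => (Sum.inl_getLeft _ _).symm, ← image_image] at hφe
  rcases mem_union.1 hφe with h | h
  · exact (image_injective Sum.inl_injective).mem_finset_image.1 h
  · obtain ⟨f, hf, hfe⟩ := mem_image.1 h
    obtain ⟨y, hy⟩ := card_pos.1 ((H.uniform f hf).symm ▸ Nat.pos_of_ne_zero hr)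
    have := hfe ▸ mem_image_of_mem Sum.inr hy
    simp at this

end Sum

variable {k : ℕ}

def link [DecidableEq β] (H : HGraph (k + 1) β) (v : β) : HGraph k β where
  edges := {e ∈ H.edges | v ∈ e}.image (·.erase v)
  uniform := by
    simp only [mem_image, mem_filter, forall_exists_index, and_imp]
    rintro _ e he hv rfl
    rw [card_erase_of_mem hv, H.uniform e he, Nat.add_sub_cancel]

theorem mem_link_iff [DecidableEq β] {H : HGraph (k + 1) β} {v : β} {X : Finset β}
    (hX : #X ≤ k) : X ∈ (H.link v).edges ↔ insert v X ∈ H.edges := by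
  simp only [link, mem_image, mem_filter]
  constructor
  · rintro ⟨e, ⟨he, hv⟩, rfl⟩
    rwa [insert_erase hv]
  · intro h
    have hv : v ∉ X := fun hv => by
      have := H.uniform _ h
      rw [insert_eq_of_mem hv] at this
      omega
    exact ⟨_, ⟨h, mem_insert_self v X⟩, erase_insert hv⟩

/-- The vertices that can serve as the apex of a cone of `H` over the image of `J` under `φ`. -/
def apexes [Fintype β] [DecidableEq β] (J : HGraph k α) (H : HGraph (k + 1) β) (φ : α → β) :
    Finset β :=
  {v | J.IsHom (H.link v) φ}

theorem mem_apexes [Fintype β] [DecidableEq β] {J : HGraph k α} {H : HGraph (k + 1) β}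
    {φ : α → β} {v : β} :
    v ∈ J.apexes H φ ↔ ∀ f ∈ J.edges, insert v (f.image φ) ∈ H.edges := by
  simp only [apexes, mem_filter, mem_univ, true_and]
  exact forall₂_congr fun f hf => mem_link_iff (card_image_le.trans (J.uniform f hf).le)

theorem mem_cone_edges [DecidableEq α] {J : HGraph k α} {t : ℕ} {e : Finset (α ⊕ Fin t)} :
    e ∈ (J.cone t).edges ↔ ∃ i, ∃ f ∈ J.edges, insert (.inr i) (f.image .inl) = e := by
  simp [cone, linkCone]

theorem isHom_cone_iff [DecidableEq α] [Fintype β] [DecidableEq β] {J : HGraph k α} {t : ℕ}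
    {H : HGraph (k + 1) β} {ψ : α ⊕ Fin t → β} :
    (J.cone t).IsHom H ψ ↔ ∀ i, ψ (.inr i) ∈ J.apexes H (ψ ∘ .inl) := by
  simp only [IsHom, mem_cone_edges, mem_apexes, forall_exists_index, and_imp]
  constructor
  · intro h i f hf
    simpa [image_insert, image_image] using h _ i f hf rfl
  · rintro h _ i f hf rfl
    simpa [image_insert, image_image] using h i f hf

end HGraph

open HGraph

section Density

variable [Fintype α] [DecidableEq α] [Fintype β] [DecidableEq β]

theorem mem_homFinset {F : HGraph r α} {H : HGraph r β} {φ : α → β} :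
    φ ∈ homFinset F H ↔ F.IsHom H φ := by
  simp [homFinset, IsHom]

theorem homFinset_eq (F : HGraph r α) (H : HGraph r β) :
    homFinset F H = ({φ | F.IsHom H φ} : Finset (α → β)) := by
  ext; simp [mem_homFinset]

theorem homDensity_eq (F : HGraph r α) (H : HGraph r β) :
    homDensity F H = homCount F H / Fintype.card (α → β) := by
  simp [homDensity]

theorem homCount_le_card (F : HGraph r α) (H : HGraph r β) :
    homCount F H ≤ Fintype.card (α → β) :=
  card_le_univ _

theorem homDensity_nonneg (F : HGraph r α) (H : HGraph r β) : 0 ≤ homDensity F H := by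
  unfold homDensity; positivity

theorem edgeDensity_nonneg (H : HGraph r β) : 0 ≤ edgeDensity H := homDensity_nonneg _ _

theorem homDensity_le_one (F : HGraph r α) (H : HGraph r β) : homDensity F H ≤ 1 := by
  rw [homDensity_eq]
  exact div_le_one_of_le₀ (mod_cast homCount_le_card F H) (Nat.cast_nonneg _)

theorem homDensity_pos {F : HGraph r α} {H : HGraph r β} {φ : α → β} (hφ : F.IsHom H φ) :
    0 < homDensity F H := by
  have : Nonempty (α → β) := ⟨φ⟩
  rw [homDensity_eq]
  exact div_pos (mod_cast card_pos.2 ⟨φ, mem_homFinset.2 hφ⟩) (mod_cast Fintype.card_pos)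

theorem homDensity_pos_iff {F : HGraph r α} {H : HGraph r β} :
    0 < homDensity F H ↔ ∃ φ, F.IsHom H φ := by
  refine ⟨fun h => ?_, fun ⟨φ, hφ⟩ => homDensity_pos hφ⟩
  by_contra! hno
  have : homCount F H = 0 :=
    card_eq_zero.2 (eq_empty_of_forall_notMem fun φ hφ => hno φ (mem_homFinset.1 hφ))
  simp [homDensity, this] at h

theorem homDensity_mul_card (F : HGraph r α) (H : HGraph r β) :
    homDensity F H * (Fintype.card β : ℝ) ^ Fintype.card α = homCount F H := by
  rcases eq_or_ne (Fintype.card (α → β)) 0 with h | h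
  · have h' := homCount_le_card F H
    rw [Fintype.card_fun] at h h'
    simp [homDensity, show homCount F H = 0 by omega]
  · rw [Fintype.card_fun] at h
    exact div_mul_cancel₀ _ (mod_cast h)

theorem edgeDensity_mul_card (H : HGraph r β) :
    edgeDensity H * (Fintype.card β : ℝ) ^ r = homCount (KEdge r) H := by
  simpa [edgeDensity] using homDensity_mul_card (KEdge r) H

theorem forall_isHom_of_homDensity_eq_one {F : HGraph r α} {H : HGraph r β}
    (h : homDensity F H = 1) (φ : α → β) : F.IsHom H φ := by
  have hc : (Fintype.card (α → β) : ℝ) ≠ 0 := by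
    rintro h0
    rw [homDensity_eq, h0, div_zero] at h
    exact zero_ne_one h
  rw [homDensity_eq, div_eq_one_iff_eq hc] at h
  exact mem_homFinset.1 ((eq_univ_of_card _ (mod_cast h)) ▸ mem_univ φ)

theorem homDensity_eq_one [Nonempty (α → β)] {F : HGraph r α} {H : HGraph r β}
    (h : ∀ φ : α → β, F.IsHom H φ) : homDensity F H = 1 := by
  have : homFinset F H = univ := eq_univ_of_forall fun φ => mem_homFinset.2 (h φ)
  rw [homDensity_eq, homCount, this, card_univ, div_self (mod_cast Fintype.card_ne_zero)]

theorem card_edges_le_homCount (H : HGraph r β) : #H.edges ≤ homCount (KEdge r) H := by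
  refine card_le_card_of_surjOn (fun ψ => univ.image ψ) fun e he => ?_
  obtain ⟨u, rfl⟩ := exists_image_univ_eq (H.uniform e he)
  exact ⟨u, mem_homFinset.2 (isHom_kEdge_iff.2 he), rfl⟩

theorem card_edges_le_edgeDensity_mul (H : HGraph r β) :
    (#H.edges : ℝ) ≤ edgeDensity H * (Fintype.card β : ℝ) ^ r := by
  rw [edgeDensity_mul_card]
  exact_mod_cast card_edges_le_homCount H

-- A homomorphism is determined by its values on the edge `f` and off `f`.
theorem homCount_le_homCount_kEdge_mul {F : HGraph r α} {f : Finset α} (hf : f ∈ F.edges)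
    (H : HGraph r β) :
    homCount F H ≤ homCount (KEdge r) H * Fintype.card β ^ (Fintype.card α - r) := by
  obtain ⟨u, hu⟩ := exists_image_univ_eq (F.uniform f hf)
  have : Fintype.card ({x // x ∉ f} → β) = Fintype.card β ^ (Fintype.card α - r) := by
    rw [Fintype.card_fun, Fintype.card_subtype_compl, Fintype.card_coe, F.uniform f hf]
  rw [← this, ← card_univ, homCount, homCount, ← card_product]
  refine card_le_card_of_injOn (fun φ => (φ ∘ u, fun x => φ x)) (fun φ hφ => ?_) ?_
  · rw [mem_coe, mem_homFinset] at hφ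
    simp only [coe_product, coe_univ, Set.mem_prod, mem_coe, mem_homFinset, isHom_kEdge_iff,
      Set.mem_univ, and_true]
    rw [← image_image, hu]
    exact hφ f hf
  · intro φ _ φ' _ h
    funext x
    by_cases hx : x ∈ f
    · obtain ⟨i, -, rfl⟩ := mem_image.1 (hu ▸ hx)
      exact congrFun (congrArg Prod.fst h) i
    · exact congrFun (congrArg Prod.snd h) ⟨x, hx⟩

theorem homDensity_le_edgeDensity {F : HGraph r α} {f : Finset α} (hf : f ∈ F.edges)
    (H : HGraph r β) : homDensity F H ≤ edgeDensity H := by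
  have hsplit : Fintype.card β ^ Fintype.card α
      = Fintype.card β ^ (Fintype.card α - r) * Fintype.card β ^ r := by
    rw [← pow_add, Nat.sub_add_cancel (F.uniform f hf ▸ card_le_univ f)]
  unfold edgeDensity homDensity
  rw [Fintype.card_fin]
  rcases eq_or_ne ((Fintype.card β : ℝ) ^ Fintype.card α) 0 with h | h
  · rw [h, div_zero]
    exact div_nonneg (Nat.cast_nonneg _) (by positivity)
  have hr : (Fintype.card β : ℝ) ^ r ≠ 0 := by
    rw [← Nat.cast_pow, hsplit, Nat.cast_mul] at h
    exact_mod_cast right_ne_zero_of_mul h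
  rw [div_le_div_iff₀ (lt_of_le_of_ne (by positivity) h.symm)
    (lt_of_le_of_ne (by positivity) hr.symm)]
  calc (homCount F H : ℝ) * Fintype.card β ^ r
      ≤ (homCount (KEdge r) H * Fintype.card β ^ (Fintype.card α - r) : ℕ)
          * Fintype.card β ^ r := by
        gcongr; exact homCount_le_homCount_kEdge_mul hf H
    _ = homCount (KEdge r) H * Fintype.card β ^ Fintype.card α := by
        rw [← Nat.cast_pow, ← Nat.cast_pow (Fintype.card β), hsplit]; push_cast; ring

variable [Fintype γ] [DecidableEq γ]

theorem homDensity_relabel (F : HGraph r α) (H : HGraph r β) (e : β ≃ γ) :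
    homDensity F (H.relabel e) = homDensity F H := by
  have : homCount F (H.relabel e) = homCount F H :=
    card_equiv ((Equiv.refl α).arrowCongr e).symm fun φ => by
      rw [mem_homFinset, mem_homFinset, ← isHom_relabel_iff (e := e)]
      congr!
      ext; simp
  simp [homDensity, this, Fintype.card_congr e]

theorem edgeDensity_relabel (H : HGraph r β) (e : β ≃ γ) :
    edgeDensity (H.relabel e) = edgeDensity H :=
  homDensity_relabel _ _ _

theorem homCount_le_of_isHom_injective {F : HGraph r α} {G : HGraph r β} {H : HGraph r γ}
    {g : β → γ} (hg : G.IsHom H g) (hinj : Injective g) : homCount F G ≤ homCount F H :=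
  card_le_card_of_injOn (g ∘ ·)
    (fun _ hφ => mem_homFinset.2 (hg.comp (mem_homFinset.1 hφ)))
    fun _ _ _ _ h => funext fun x => hinj (congrFun h x)

theorem homCount_mul_pow_le_homCount_blowup (F : HGraph r α) (L : HGraph r β) (w : ℕ) :
    homCount F L * w ^ Fintype.card α ≤ homCount F (L.blowup w) := by
  have : Fintype.card (α → Fin w) = w ^ Fintype.card α := by simp
  rw [← this, ← card_univ, homCount, ← card_product]
  refine card_le_card_of_injOn (fun p x => (p.1 x, p.2 x)) (fun p hp => ?_) ?_
  · have hφ := mem_homFinset.1 (mem_product.1 hp).1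
    refine mem_homFinset.2 fun e he => ?_
    have hfst : (e.image fun x => (p.1 x, p.2 x)).image Prod.fst = e.image p.1 := by
      rw [image_image]; rfl
    refine mem_filter.2 ⟨mem_powersetCard.2 ⟨subset_univ _, le_antisymm ?_ ?_⟩, hfst ▸ hφ e he⟩
    · exact card_image_le.trans (F.uniform e he).le
    · exact (L.uniform _ (hφ e he)).symm.le.trans (hfst ▸ card_image_le)
  · intro p _ q _ h
    exact Prod.ext (funext fun x => congrArg Prod.fst (congrFun h x))
      (funext fun x => congrArg Prod.snd (congrFun h x))

theorem homDensity_sum_mul_le (hr : r ≠ 0) {F : HGraph r α} {G : HGraph r β}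
    (hG : ∀ ψ, ¬F.IsHom G ψ) (H : HGraph r γ) :
    homDensity F (G.sum H) * Fintype.card (β ⊕ γ) ≤ Fintype.card α * Fintype.card γ := by
  set N := Fintype.card (β ⊕ γ)
  set T : Finset (β ⊕ γ) := univ.image Sum.inr
  have hT : #T = Fintype.card γ := by rw [card_image_of_injective _ Sum.inr_injective, card_univ]
  have hsub : homFinset F (G.sum H) ⊆ univ.biUnion fun u => {φ : α → β ⊕ γ | φ u ∈ T} := by
    intro φ hφ
    obtain ⟨u, hu⟩ := exists_isRight_of_isHom_sum hr hG H (mem_homFinset.1 hφ)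
    obtain ⟨y, hy⟩ := Sum.isRight_iff.1 hu
    simpa [T] using ⟨u, y, hy.symm⟩
  have hcount : homCount F (G.sum H) * N ≤ Fintype.card α * Fintype.card γ * N ^ Fintype.card α :=
    calc homCount F (G.sum H) * N ≤ (∑ u, #{φ : α → β ⊕ γ | φ u ∈ T}) * N := by
          gcongr; exact (card_le_card hsub).trans card_biUnion_le
      _ ≤ ∑ _u : α, #T * N ^ Fintype.card α := by
          rw [sum_mul]; exact sum_le_sum fun u _ => card_filter_apply_mem_mul_le u T
      _ = Fintype.card α * Fintype.card γ * N ^ Fintype.card α := by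
          rw [sum_const, card_univ, smul_eq_mul, hT, mul_assoc]
  rcases Nat.eq_zero_or_pos N with hN | hN
  · rw [hN, Nat.cast_zero, mul_zero]; positivity
  rw [← mul_le_mul_iff_of_pos_right (pow_pos (Nat.cast_pos.2 hN) (Fintype.card α)),
    mul_right_comm, homDensity_mul_card]
  exact_mod_cast hcount

end Density

def SidorenkoBound [Fintype α] [DecidableEq α] (F : HGraph r α) (σ : ℝ) : Prop :=
  ∀ (β : Type) [Fintype β] [DecidableEq β] (H : HGraph r β), edgeDensity H ^ σ ≤ homDensity F H

section Cone

variable {k : ℕ} [Fintype α] [DecidableEq α] [Fintype β] [DecidableEq β]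

theorem homCount_cone (J : HGraph k α) (t : ℕ) (H : HGraph (k + 1) β) :
    homCount (J.cone t) H = ∑ φ : α → β, #(J.apexes H φ) ^ t := by
  calc homCount (J.cone t) H
      = #{p : (α → β) × (Fin t → β) | p.2 ∈ Fintype.piFinset fun _ => J.apexes H p.1} :=
        card_equiv (Equiv.sumArrowEquivProdArrow α (Fin t) β) fun ψ => by
          simp only [mem_homFinset, isHom_cone_iff, mem_filter, mem_univ, true_and,
            Fintype.mem_piFinset]
          rfl
    _ = ∑ φ : α → β, #(J.apexes H φ) ^ t := by
        rw [card_filter_prod_eq_sum fun φ (g : Fin t → β) => g ∈ Fintype.piFinset fun _ =>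
          J.apexes H φ]
        simp only [filter_mem_eq_inter, univ_inter, Fintype.card_piFinset, prod_const, card_univ,
          Fintype.card_fin]

theorem sum_card_apexes (J : HGraph k α) (H : HGraph (k + 1) β) :
    ∑ φ : α → β, #(J.apexes H φ) = ∑ v : β, homCount J (H.link v) := by
  simp only [homCount, homFinset_eq]
  exact sum_card_bipartiteAbove_eq_sum_card_bipartiteBelow fun φ v => J.IsHom (H.link v) φ

theorem sum_homCount_link (H : HGraph (k + 1) β) :
    ∑ v : β, homCount (KEdge k) (H.link v) = homCount (KEdge (k + 1)) H := by
  calc ∑ v : β, homCount (KEdge k) (H.link v)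
      = #{p : β × (Fin k → β) | insert p.1 (univ.image p.2) ∈ H.edges} := by
        rw [card_filter_prod_eq_sum fun v (χ : Fin k → β) => insert v (univ.image χ) ∈ H.edges]
        simp only [homCount, homFinset_eq]
        refine sum_congr rfl fun v _ => congrArg card (filter_congr fun χ _ => ?_)
        rw [isHom_kEdge_iff, mem_link_iff (card_image_le.trans_eq (by simp))]
    _ = homCount (KEdge (k + 1)) H :=
        card_equiv (Fin.consEquiv fun _ => β) fun p => by
          simp only [mem_homFinset, isHom_kEdge_iff, mem_filter, mem_univ, true_and]
          rw [show Fin.consEquiv (fun _ => β) p = Fin.cons p.1 p.2 from rfl, image_univ_cons]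

theorem sum_edgeDensity_link (H : HGraph (k + 1) β) :
    ∑ v : β, edgeDensity (H.link v) = Fintype.card β * edgeDensity H := by
  rcases isEmpty_or_nonempty β with hβ | hβ
  · simp
  have hn : (0 : ℝ) < Fintype.card β := mod_cast Fintype.card_pos
  have h := congrArg (Nat.cast : ℕ → ℝ) (sum_homCount_link H)
  simp only [Nat.cast_sum, ← edgeDensity_mul_card, ← sum_mul, pow_succ, ← mul_assoc] at h
  exact mul_right_cancel₀ (pow_pos hn k).ne' (h.trans (by ring))

theorem SidorenkoBound.card_pow_mul_le_sum_card_apexes {J : HGraph k α} {σ : ℝ}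
    (hJ : SidorenkoBound J σ) (hσ : 1 ≤ σ) (H : HGraph (k + 1) β) :
    (Fintype.card β : ℝ) ^ (Fintype.card α + 1) * edgeDensity H ^ σ
      ≤ ∑ φ : α → β, (#(J.apexes H φ) : ℝ) := by
  have hjensen := card_mul_rpow_le_sum_rpow univ (fun v _ => edgeDensity_nonneg (H.link v)) hσ
    (by rw [card_univ, sum_edgeDensity_link])
  rw [card_univ] at hjensen
  calc (Fintype.card β : ℝ) ^ (Fintype.card α + 1) * edgeDensity H ^ σ
      = (Fintype.card β * edgeDensity H ^ σ) * (Fintype.card β : ℝ) ^ Fintype.card α := by ring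
    _ ≤ (∑ v : β, edgeDensity (H.link v) ^ σ) * (Fintype.card β : ℝ) ^ Fintype.card α := by
        gcongr
    _ ≤ ∑ v : β, homDensity J (H.link v) * (Fintype.card β : ℝ) ^ Fintype.card α := by
        rw [sum_mul]; gcongr with v; exact hJ β _
    _ = ∑ φ : α → β, (#(J.apexes H φ) : ℝ) := by
        simp only [homDensity_mul_card]; exact_mod_cast (sum_card_apexes J H).symm

theorem SidorenkoBound.cone {J : HGraph k α} {σ : ℝ} (hJ : SidorenkoBound J σ) (hσ : 1 ≤ σ)
    {t : ℕ} (ht : t ≠ 0) : SidorenkoBound (J.cone t) (σ * t) := by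
  intro β _ _ H
  rcases isEmpty_or_nonempty β with hβ | hβ
  · have : edgeDensity H = 0 := by simp [edgeDensity, homDensity]
    rw [this, Real.zero_rpow (by positivity)]
    exact homDensity_nonneg _ _
  obtain ⟨s, rfl⟩ := Nat.exists_eq_succ_of_ne_zero ht
  set n : ℝ := (Fintype.card β : ℝ)
  set a := Fintype.card α
  have hn : 0 < n := Nat.cast_pos.2 Fintype.card_pos
  have hd := edgeDensity_nonneg H
  have hpowmean := pow_sum_div_card_le_sum_pow (s := univ)
    (f := fun φ : α → β => (#(J.apexes H φ) : ℝ)) (fun _ _ => by positivity) s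
  rw [card_univ, Fintype.card_fun] at hpowmean
  rw [homDensity, le_div_iff₀ (by positivity), homCount_cone, Fintype.card_sum, Fintype.card_fin,
    Real.rpow_mul hd, Real.rpow_natCast]
  push_cast
  calc (edgeDensity H ^ σ) ^ (s + 1) * n ^ (a + (s + 1))
      = (n ^ (a + 1) * edgeDensity H ^ σ) ^ (s + 1) / (n ^ a) ^ s := by
        field_simp; ring
    _ ≤ (∑ φ : α → β, (#(J.apexes H φ) : ℝ)) ^ (s + 1) / (n ^ a) ^ s := by
        gcongr; exact hJ.card_pow_mul_le_sum_card_apexes hσ H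
    _ ≤ ∑ φ : α → β, (#(J.apexes H φ) : ℝ) ^ (s + 1) := by
        simpa using hpowmean

end Cone

section Turan

variable {k : ℕ} [Fintype γ] [DecidableEq γ] [Fintype β] [DecidableEq β]

theorem containsCopy_cone_of_injective {G : HGraph k γ} {H : HGraph (k + 1) β} {φ : γ → β}
    (hφ : Injective φ) {t : ℕ} (ht : t + Fintype.card γ ≤ #(G.apexes H φ)) :
    H.ContainsCopy (G.cone t) := by
  have hS : Fintype.card (Fin t) ≤ Fintype.card ↥(G.apexes H φ \ univ.image φ) := by
    have := le_card_sdiff (univ.image φ) (G.apexes H φ)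
    have := (card_image_le (s := univ) (f := φ)).trans_eq (card_univ (α := γ))
    simp only [Fintype.card_fin, Fintype.card_coe]
    omega
  obtain ⟨e⟩ := Function.Embedding.nonempty_of_card_le hS
  have he (i : Fin t) : (e i : β) ∈ G.apexes H φ ∧ (e i : β) ∉ univ.image φ :=
    mem_sdiff.1 (e i).2
  refine ⟨Sum.elim φ fun i => e i, hφ.sumElim (Subtype.val_injective.comp e.injective) ?_,
    isHom_cone_iff.2 fun i => (he i).1⟩
  intro x i hxi
  exact (he i).2 (hxi ▸ mem_image_of_mem φ (mem_univ x))

-- Few maps `γ → β` are non-injective, so a large total number of apexes puts more than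
-- `t + |γ|` of them over some injective `φ`.
theorem containsCopy_cone_of_lt_sum_card_apexes {G : HGraph k γ} {H : HGraph (k + 1) β}
    {t : ℕ} (h : (Fintype.card γ ^ 2 + t + Fintype.card γ) * Fintype.card β ^ Fintype.card γ
      < ∑ φ : γ → β, #(G.apexes H φ)) :
    H.ContainsCopy (G.cone t) := by
  by_contra hH
  have hsmall (φ : γ → β) (hφ : Injective φ) : #(G.apexes H φ) ≤ t + Fintype.card γ := by
    by_contra! hlt
    exact hH (containsCopy_cone_of_injective hφ hlt.le)
  refine h.not_ge ?_
  rw [← sum_filter_add_sum_filter_not univ Injective]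
  calc ∑ φ ∈ univ with Injective φ, #(G.apexes H φ) + ∑ φ ∈ univ with ¬Injective φ, #(G.apexes H φ)
      ≤ #{φ : γ → β | Injective φ} * (t + Fintype.card γ)
          + #{φ : γ → β | ¬Injective φ} * Fintype.card β :=
        add_le_add
          ((sum_le_card_nsmul _ _ _ fun φ hφ => hsmall φ (mem_filter.1 hφ).2).trans_eq
            (smul_eq_mul _ _))
          ((sum_le_card_nsmul _ _ _ fun φ _ => card_le_univ (G.apexes H φ)).trans_eq
            (smul_eq_mul _ _))
    _ ≤ Fintype.card β ^ Fintype.card γ * (t + Fintype.card γ)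
          + Fintype.card γ ^ 2 * Fintype.card β ^ Fintype.card γ :=
        add_le_add
          (Nat.mul_le_mul_right _
            ((card_filter_le _ _).trans_eq (by rw [card_univ, Fintype.card_fun])))
          card_filter_not_injective_mul_le
    _ = _ := by ring

theorem SidorenkoBound.card_edges_le_of_not_containsCopy_cone {G : HGraph k γ} {σ : ℝ}
    (hG : SidorenkoBound G σ) (hσ : 1 ≤ σ) {t : ℕ} {H : HGraph (k + 1) β}
    (hH : ¬H.ContainsCopy (G.cone t)) :
    (#H.edges : ℝ) ≤ ((Fintype.card γ ^ 2 + t + Fintype.card γ + 1 : ℕ) : ℝ)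
      * (Fintype.card β : ℝ) ^ ((k + 1 : ℝ) - 1 / σ) := by
  refine (card_edges_le_edgeDensity_mul H).trans ?_
  rcases isEmpty_or_nonempty β with hβ | hβ
  · rw [Fintype.card_eq_zero, Nat.cast_zero, zero_pow (Nat.succ_ne_zero k), mul_zero]
    positivity
  set a := Fintype.card γ
  set C : ℝ := ((a ^ 2 + t + a + 1 : ℕ) : ℝ)
  set n : ℝ := (Fintype.card β : ℝ)
  have hC : 1 ≤ C := Nat.one_le_cast.2 (Nat.le_add_left _ _)
  have hn : 0 < n := Nat.cast_pos.2 Fintype.card_pos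
  suffices hd : edgeDensity H ≤ C * n ^ (-(1 / σ)) by
    calc edgeDensity H * n ^ (k + 1) ≤ C * n ^ (-(1 / σ)) * n ^ (k + 1) := by gcongr
      _ = C * n ^ ((k + 1 : ℝ) - 1 / σ) := by
        rw [mul_assoc, ← Real.rpow_natCast, ← Real.rpow_add hn]
        push_cast
        ring_nf
  by_contra! hlt
  have hpow : C ^ σ / n < edgeDensity H ^ σ :=
    calc C ^ σ / n = (C * n ^ (-(1 / σ))) ^ σ := by
          rw [Real.mul_rpow (by positivity) (by positivity), ← Real.rpow_mul hn.le,
            show -(1 / σ) * σ = -1 by field_simp, Real.rpow_neg_one, div_eq_mul_inv]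
      _ < edgeDensity H ^ σ := Real.rpow_lt_rpow (by positivity) hlt (by linarith)
  have hC_le : C ≤ C ^ σ := by simpa using Real.rpow_le_rpow_of_exponent_le hC hσ
  refine hH (containsCopy_cone_of_lt_sum_card_apexes ?_)
  have : ((a ^ 2 + t + a : ℕ) : ℝ) * n ^ a < ∑ φ : γ → β, (#(G.apexes H φ) : ℝ) :=
    calc ((a ^ 2 + t + a : ℕ) : ℝ) * n ^ a < C * n ^ a := by gcongr; simp [C]
      _ ≤ C ^ σ * n ^ a := by gcongr
      _ = n ^ (a + 1) * (C ^ σ / n) := by field_simp; ring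
      _ < n ^ (a + 1) * edgeDensity H ^ σ := by gcongr
      _ ≤ _ := hG.card_pow_mul_le_sum_card_apexes hσ H
  simp only [n] at this
  exact_mod_cast this

end Turan

theorem card_edges_le_pow [Fintype β] [DecidableEq β] (H : HGraph r β) :
    #H.edges ≤ Fintype.card β ^ r :=
  calc #H.edges ≤ #((univ : Finset β).powersetCard r) :=
        card_le_card fun e he => mem_powersetCard.2 ⟨subset_univ e, H.uniform e he⟩
    _ ≤ Fintype.card β ^ r := by
        rw [card_powersetCard, card_univ]; exact Nat.choose_le_pow _ _

theorem exNum_le_of_forall {G : HGraph r γ} {n : ℕ} {R : ℝ} (hR : 0 ≤ R)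
    (h : ∀ H : HGraph r (Fin n), ¬H.ContainsCopy G → (#H.edges : ℝ) ≤ R) :
    (exNum n G : ℝ) ≤ R := by
  refine le_trans (Nat.cast_le.2 (csSup_le' ?_)) (Nat.floor_le hR)
  rintro m ⟨H, rfl, hH⟩
  exact Nat.le_floor (h H hH)

theorem exNum_le_pow (n : ℕ) (G : HGraph r γ) : (exNum n G : ℝ) ≤ (n : ℝ) ^ r :=
  exNum_le_of_forall (by positivity) fun H _ => by
    simpa using (Nat.cast_le (α := ℝ)).2 (card_edges_le_pow H)

section SidorenkoExponent

variable {k : ℕ} [Fintype α] [DecidableEq α]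

def sidorenkoExponents (F : HGraph r α) : Set ℝ :=
  {s : ℝ | 0 ≤ s ∧ ∃ (n : ℕ) (H : HGraph r (Fin n)),
    homDensity F H = edgeDensity H ^ s ∧ 0 < edgeDensity H ^ s}

theorem sidorenkoExp_eq_sSup (F : HGraph r α) : sidorenkoExp F = sSup (sidorenkoExponents F) :=
  rfl

theorem sidorenkoExp_nonneg (F : HGraph r α) : 0 ≤ sidorenkoExp F :=
  Real.sSup_nonneg fun _ hs => hs.1

theorem mem_sidorenkoExponents [Fintype β] [DecidableEq β] {F : HGraph r α} {s : ℝ} (hs : 0 ≤ s)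
    (H : HGraph r β) (h : homDensity F H = edgeDensity H ^ s) (hpos : 0 < homDensity F H) :
    s ∈ sidorenkoExponents F := by
  refine ⟨hs, _, H.relabel (Fintype.equivFin β), ?_⟩
  rw [homDensity_relabel, edgeDensity_relabel, ← h]
  exact ⟨rfl, hpos⟩

theorem le_sidorenkoExp {F : HGraph r α} (hF : 0 < sidorenkoExp F) {s : ℝ}
    (hs : s ∈ sidorenkoExponents F) : s ≤ sidorenkoExp F := by
  have hb : BddAbove (sidorenkoExponents F) := by
    by_contra hb
    rw [sidorenkoExp_eq_sSup, Real.sSup_of_not_bddAbove hb] at hF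
    exact hF.false
  exact le_csSup hb hs

variable [Fintype β] [DecidableEq β] {F : HGraph k α}

-- If `t_K(H) = 1` then `t_F(H) = 1 = t_K(H) ^ s` for every `s ≥ 0`, so the set of exponents is
-- unbounded and its supremum is the junk value `0`.
theorem edgeDensity_lt_one_of_sidorenkoExp_pos (hk : k ≠ 0) (hF : 0 < sidorenkoExp F)
    (H : HGraph k β) : edgeDensity H < 1 := by
  refine (homDensity_le_one _ _).lt_of_ne fun h1 => ?_
  rcases isEmpty_or_nonempty β with hβ | hβ
  · simp [homDensity, hk] at h1
  have ht : homDensity F H = 1 :=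
    homDensity_eq_one fun _ => IsHom.of_kEdge (forall_isHom_of_homDensity_eq_one h1)
  have := le_sidorenkoExp hF (mem_sidorenkoExponents (s := sidorenkoExp F + 1) (by linarith) H
    (by rw [ht, edgeDensity, h1, Real.one_rpow]) (ht ▸ one_pos))
  linarith

theorem rpow_sidorenkoExp_le_homDensity (hk : k ≠ 0) (hF : 0 < sidorenkoExp F)
    (H : HGraph k β) (h0 : 0 < edgeDensity H) (hpos : 0 < homDensity F H) :
    edgeDensity H ^ sidorenkoExp F ≤ homDensity F H := by
  have h1 := edgeDensity_lt_one_of_sidorenkoExp_pos hk hF H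
  have hx := Real.rpow_logb h0 h1.ne hpos
  have hx0 := Real.logb_nonneg_of_base_lt_one h0 h1 hpos (homDensity_le_one _ _)
  calc edgeDensity H ^ sidorenkoExp F
      ≤ edgeDensity H ^ Real.logb (edgeDensity H) (homDensity F H) :=
        Real.rpow_le_rpow_of_exponent_ge h0 h1.le
          (le_sidorenkoExp hF (mem_sidorenkoExponents hx0 H hx.symm hpos))
    _ = homDensity F H := hx

theorem edges_nonempty_of_sidorenkoExp_pos (hk : k ≠ 0) (hF : 0 < sidorenkoExp F) :
    F.edges.Nonempty := by
  by_contra hE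
  rw [not_nonempty_iff_eq_empty] at hE
  have hne : (sidorenkoExponents F).Nonempty := by
    by_contra h
    rw [Set.not_nonempty_iff_eq_empty] at h
    rw [sidorenkoExp_eq_sSup, h, Real.sSup_empty] at hF
    exact hF.false
  obtain ⟨x, ⟨-, n, H, hH, hpos⟩, hx⟩ := exists_lt_of_lt_csSup hne hF
  obtain ⟨φ, -⟩ := homDensity_pos_iff.1 (hH ▸ hpos)
  have : Nonempty (α → Fin n) := ⟨φ⟩
  have ht : homDensity F H = 1 := homDensity_eq_one fun _ e he => by simp [hE] at he
  exact (Real.rpow_lt_one (edgeDensity_nonneg H) (edgeDensity_lt_one_of_sidorenkoExp_pos hk hF H)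
    hx).ne (hH.symm.trans ht)

theorem one_le_sidorenkoExp (hk : k ≠ 0) (hF : 0 < sidorenkoExp F) : 1 ≤ sidorenkoExp F := by
  obtain ⟨f, hf⟩ := edges_nonempty_of_sidorenkoExp_pos hk hF
  have hpos : 0 < homDensity F F := homDensity_pos (φ := id) fun e he => by rwa [image_id]
  have hle := homDensity_le_edgeDensity hf F
  have h0 := hpos.trans_le hle
  rw [← Real.rpow_le_rpow_left_iff_of_base_lt_one h0
    (edgeDensity_lt_one_of_sidorenkoExp_pos hk hF F), Real.rpow_one]
  exact (rpow_sidorenkoExp_le_homDensity hk hF F h0 hpos).trans hle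

theorem div_le_edgeDensity_sum_blowup [Fintype γ] [DecidableEq γ] (L : HGraph k β)
    (M : HGraph k γ) {w : ℕ} (hw : w ≠ 0) :
    (homCount (KEdge k) L : ℝ) / (Fintype.card β + Fintype.card γ) ^ k
      ≤ edgeDensity ((L.blowup w).sum M) := by
  set b := Fintype.card β
  set c := Fintype.card γ
  have hN : Fintype.card (β × Fin w ⊕ γ) = b * w + c := by simp [b, c]
  have hw1 : (1 : ℝ) ≤ w := Nat.one_le_cast.2 (Nat.pos_of_ne_zero hw)
  rcases eq_or_ne (((b : ℝ) + c) ^ k) 0 with h | h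
  · rw [h, div_zero]
    exact edgeDensity_nonneg _
  have hbc : 0 < ((b : ℝ) + c) ^ k := lt_of_le_of_ne (by positivity) h.symm
  have hcount : homCount (KEdge k) L * w ^ k ≤ homCount (KEdge k) ((L.blowup w).sum M) := by
    simpa using (homCount_mul_pow_le_homCount_blowup (KEdge k) L w).trans
      (homCount_le_of_isHom_injective (isHom_inl _ M) Sum.inl_injective)
  rw [edgeDensity, homDensity, hN, Fintype.card_fin]
  push_cast
  calc (homCount (KEdge k) L : ℝ) / (b + c) ^ k
      = (homCount (KEdge k) L * w ^ k : ℕ) / (((b : ℝ) + c) * w) ^ k := by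
        rw [mul_pow]; push_cast; field_simp
    _ ≤ homCount (KEdge k) ((L.blowup w).sum M) / ((b : ℝ) * w + c) ^ k := by
        gcongr
        · exact hbc.trans_le (by gcongr; nlinarith)
        · nlinarith

-- In `L[w] ⊔ F` the density of `K_k^{(k)}` stays bounded below while `t_F ≤ |α|² / w`; large `w`
-- then contradicts the finiteness of `sidorenkoExp F`.
theorem homDensity_pos_of_sidorenkoExp_pos (hk : k ≠ 0) (hF : 0 < sidorenkoExp F)
    {L : HGraph k β} (hL : 0 < edgeDensity L) : 0 < homDensity F L := by
  rw [homDensity_pos_iff]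
  by_contra! hno
  have hβ : Nonempty β := by
    by_contra h
    rw [not_nonempty_iff] at h
    simp [edgeDensity, homDensity, hk] at hL
  set A := Fintype.card α
  set s := sidorenkoExp F
  set δ : ℝ := homCount (KEdge k) L / (Fintype.card β + A) ^ k
  have hδ : 0 < δ := by
    refine div_pos (Nat.cast_pos.2 (Nat.pos_of_ne_zero fun h => ?_)) (by positivity)
    simp [edgeDensity, homDensity, h] at hL
  have key (w : ℕ) (hw : w ≠ 0) : δ ^ s ≤ A * A / w := by
    set X := (L.blowup w).sum F
    have hXK : δ ≤ edgeDensity X := div_le_edgeDensity_sum_blowup L F hw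
    have hXF := homDensity_sum_mul_le hk (fun ψ hψ => hno _ ((L.isHom_fst_blowup w).comp hψ)) F
    have hN : (w : ℝ) ≤ Fintype.card (β × Fin w ⊕ α) := by
      have : 1 ≤ Fintype.card β := Fintype.card_pos
      simp only [Fintype.card_sum, Fintype.card_prod, Fintype.card_fin]
      exact_mod_cast (Nat.le_mul_of_pos_left w this).trans (Nat.le_add_right _ _)
    calc δ ^ s ≤ edgeDensity X ^ s := Real.rpow_le_rpow hδ.le hXK (sidorenkoExp_nonneg F)
      _ ≤ homDensity F X := rpow_sidorenkoExp_le_homDensity hk hF X (hδ.trans_le hXK)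
          (homDensity_pos (isHom_inr _ _))
      _ ≤ A * A / w := by
          rw [le_div_iff₀ (by positivity)]
          exact (mul_le_mul_of_nonneg_left hN (homDensity_nonneg _ _)).trans hXF
  have hδs : 0 < δ ^ s := Real.rpow_pos_of_pos hδ s
  obtain ⟨w, hw⟩ := exists_nat_gt (A * A / δ ^ s)
  have hw0 : (0 : ℝ) < w := lt_of_le_of_lt (by positivity) hw
  have := key w (by exact_mod_cast hw0.ne')
  rw [div_lt_iff₀ hδs] at hw
  rw [le_div_iff₀ hw0] at this
  linarith

theorem sidorenkoBound_sidorenkoExp (hk : k ≠ 0) (hF : 0 < sidorenkoExp F) :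
    SidorenkoBound F (sidorenkoExp F) := by
  intro β _ _ H
  rcases (edgeDensity_nonneg H).eq_or_lt with h0 | h0
  · rw [← h0, Real.zero_rpow hF.ne']
    exact homDensity_nonneg _ _
  exact rpow_sidorenkoExp_le_homDensity hk hF H h0 (homDensity_pos_of_sidorenkoExp_pos hk hF h0)

end SidorenkoExponent

namespace BHG

def SidorenkoBound (b : BHG) (σ : ℝ) : Prop :=
  letI := b.fin; letI := b.deq; _root_.SidorenkoBound b.G σ

theorem SidorenkoBound.cone {b : BHG} {σ : ℝ} (h : b.SidorenkoBound σ) (hσ : 1 ≤ σ) {t : ℕ}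
    (ht : t ≠ 0) : (b.cone t).SidorenkoBound (σ * t) :=
  letI := b.fin; letI := b.deq; _root_.SidorenkoBound.cone h hσ ht

theorem SidorenkoBound.coneIter {b : BHG} {σ : ℝ} (h : b.SidorenkoBound σ) (hσ : 1 ≤ σ)
    {l : List ℕ} (hl : ∀ t ∈ l, 0 < t) : (b.coneIter l).SidorenkoBound (σ * l.prod) := by
  induction l generalizing b σ with
  | nil => simpa [BHG.coneIter] using h
  | cons t l ih =>
    have ht : (1 : ℝ) ≤ t := Nat.one_le_cast.2 (hl t List.mem_cons_self)
    have := ih (h.cone hσ (hl t List.mem_cons_self).ne') (one_le_mul_of_one_le_of_one_le hσ ht)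
      fun s hs => hl s (List.mem_cons_of_mem _ hs)
    rwa [List.prod_cons, Nat.cast_mul, ← mul_assoc]

theorem r_coneIter (b : BHG) (l : List ℕ) : (b.coneIter l).r = b.r + l.length := by
  induction l generalizing b with
  | nil => rfl
  | cons t l ih =>
    change ((b.cone t).coneIter l).r = _
    rw [ih, List.length_cons]
    exact (Nat.add_right_comm _ _ _).trans (Nat.add_assoc _ _ _)

theorem coneIter_append_singleton (b : BHG) (l : List ℕ) (t : ℕ) :
    b.coneIter (l ++ [t]) = (b.coneIter l).cone t :=
  List.foldl_append ..

theorem exNum_le_pow (b : BHG) (n : ℕ) : (b.exNum n : ℝ) ≤ (n : ℝ) ^ b.r :=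
  letI := b.fin; letI := b.deq; _root_.exNum_le_pow n b.G

theorem exNum_cone_le {b : BHG} {σ : ℝ} (h : b.SidorenkoBound σ) (hσ : 1 ≤ σ) (t : ℕ) :
    ∃ C : ℝ, 0 < C ∧ ∀ n : ℕ,
      ((b.cone t).exNum n : ℝ) ≤ C * (n : ℝ) ^ ((b.r + 1 : ℝ) - 1 / σ) := by
  let _ := b.fin; let _ := b.deq
  refine ⟨((Fintype.card b.V ^ 2 + t + Fintype.card b.V + 1 : ℕ) : ℝ), by positivity, fun n =>
    exNum_le_of_forall (by positivity) fun H hH => ?_⟩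
  simpa using _root_.SidorenkoBound.card_edges_le_of_not_containsCopy_cone h hσ hH

end BHG

/-- Here `ts = [t₁,…,t_ℓ]`, so that `ℓ = ts.length` and `r = k + ℓ`. -/
theorem stmt9 {k : ℕ} (hk : 1 ≤ k) {α : Type} [Fintype α] [DecidableEq α]
    (F : HGraph k α) (ts : List ℕ) (hne : ts ≠ []) (hpos : ∀ t ∈ ts, 0 < t) :
    ∃ C : ℝ, 0 < C ∧ ∀ n : ℕ,
      (((BHG.mk k α inferInstance inferInstance F).coneIter ts).exNum n : ℝ) ≤
        C * (n : ℝ) ^ ((k + ts.length : ℝ) -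
          1 / (sidorenkoExp F * (ts.dropLast.prod : ℝ))) := by
  set b : BHG := BHG.mk k α inferInstance inferInstance F
  obtain ⟨l, t, rfl⟩ : ∃ l t, ts = l ++ [t] := ⟨_, _, (List.dropLast_append_getLast hne).symm⟩
  rw [List.dropLast_concat]
  rcases (sidorenkoExp_nonneg F).eq_or_lt with hs | hs
  · refine ⟨1, one_pos, fun n => ?_⟩
    rw [← hs, zero_mul, div_zero, sub_zero, one_mul]
    have hr : (b.coneIter (l ++ [t])).r = k + (l ++ [t]).length := b.r_coneIter _
    exact_mod_cast hr ▸ (b.coneIter (l ++ [t])).exNum_le_pow n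
  have hk₀ : k ≠ 0 := Nat.one_le_iff_ne_zero.1 hk
  have hs₁ := one_le_sidorenkoExp hk₀ hs
  have hl : ∀ t ∈ l, 0 < t := fun t ht => hpos t (List.mem_append_left _ ht)
  have hσ : 1 ≤ sidorenkoExp F * l.prod :=
    one_le_mul_of_one_le_of_one_le hs₁ (Nat.one_le_cast.2 (List.prod_pos hl))
  have hb : b.SidorenkoBound (sidorenkoExp F) := sidorenkoBound_sidorenkoExp hk₀ hs
  obtain ⟨C, hC, hbound⟩ := BHG.exNum_cone_le (hb.coneIter hs₁ hl) hσ t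
  refine ⟨C, hC, fun n => ?_⟩
  rw [b.coneIter_append_singleton]
  convert hbound n using 4
  simp only [b.r_coneIter, List.length_append, List.length_singleton, b]
  push_cast
  ring
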